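/- For every α, β ∈ (0,1) with α + β < 1 there exists a function f₀ ∈ C(G_m²) such that ω(f₀,1/M_n)_C = O((1/M_n)^{α+β}) as n → ∞, and nevertheless lim sup_{n→∞} ‖σ_{M_n,M_n}^{−α,−β}(f₀) − f₀‖₁ > 0. -/

import Mathlib

open MeasureTheory Filter Finset
open scoped ENNReal NNReal Real

noncomputable section

namespace Vilenkin

/-- The bounded Vilenkin group: complete direct product of the cyclic groups `ZMod (m k)`. -/
abbrev G (m : ℕ → ℕ) : Type := ∀ k, ZMod (m k)

/-- The generalized number system `M 0 = 1`, `M (k+1) = m k * M k`. -/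
def M (m : ℕ → ℕ) : ℕ → ℕ
  | 0 => 1
  | k + 1 => m k * M m k

/-- The cylinder neighbourhood `I n = {x | x 0 = ⋯ = x (n-1) = 0}`. -/
def I (m : ℕ → ℕ) (n : ℕ) : Set (G m) := {x | ∀ j < n, x j = 0}

/-- The `j`-th digit of `n` in the generalized number system based on `m`. -/
def digit (m : ℕ → ℕ) (n j : ℕ) : ℕ := n / M m j % m j

/-- The generalized Rademacher functions `r k x = exp (2 π i x_k / m_k)`. -/
def rad (m : ℕ → ℕ) (k : ℕ) (x : G m) : ℂ :=
  Complex.exp (2 * Real.pi * Complex.I * ((x k).val : ℂ) / (m k : ℂ))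

/-- The Vilenkin system `ψ n = ∏ k, (r k) ^ (n_k)`. -/
def psi (m : ℕ → ℕ) (n : ℕ) (x : G m) : ℂ :=
  ∏ k ∈ Finset.range (n + 1), rad m k x ^ digit m n k

/-- The Vilenkin-Dirichlet kernels `D n = ∑_{k<n} ψ k`. -/
def D (m : ℕ → ℕ) (n : ℕ) (x : G m) : ℂ := ∑ k ∈ Finset.range n, psi m k x

/-- The Cesàro numbers `A n α = (α+1)⋯(α+n)/n!`. -/
def A (α : ℝ) (n : ℕ) : ℝ := (∏ i ∈ Finset.range n, (α + (i + 1))) / (n.factorial : ℝ)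

/-- One-dimensional Vilenkin-Fourier coefficients. -/
def fhat1 (m : ℕ → ℕ) (μ : Measure (G m)) (f : G m → ℂ) (i : ℕ) : ℂ :=
  ∫ x, f x * (starRingEnd ℂ) (psi m i x) ∂μ

/-- One-dimensional `(C,-α)` Cesàro means of the Vilenkin-Fourier series. -/
def cesaro1 (m : ℕ → ℕ) (μ : Measure (G m)) (α : ℝ) (f : G m → ℂ) (n : ℕ) (x : G m) : ℂ :=
  ((A (-α) n : ℝ) : ℂ)⁻¹ *
    ∑ i ∈ Finset.range (n + 1), ((A (-α) (n - i) : ℝ) : ℂ) * fhat1 m μ f i * psi m i x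

/-- Double Vilenkin-Fourier coefficients. -/
def fhat2 (m : ℕ → ℕ) (μ : Measure (G m)) (f : G m × G m → ℂ) (i j : ℕ) : ℂ :=
  ∫ z, f z * (starRingEnd ℂ) (psi m i z.1) * (starRingEnd ℂ) (psi m j z.2) ∂(μ.prod μ)

/-- Rectangular partial sums of the double Vilenkin-Fourier series. -/
def partialSum2 (m : ℕ → ℕ) (μ : Measure (G m)) (f : G m × G m → ℂ) (n₁ n₂ : ℕ)
    (z : G m × G m) : ℂ :=
  ∑ k₁ ∈ Finset.range n₁, ∑ k₂ ∈ Finset.range n₂,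
    fhat2 m μ f k₁ k₂ * psi m k₁ z.1 * psi m k₂ z.2

/-- The `(C,-α,-β)` means of the double Vilenkin-Fourier series. -/
def cesaro2 (m : ℕ → ℕ) (μ : Measure (G m)) (α β : ℝ) (f : G m × G m → ℂ) (n₁ n₂ : ℕ)
    (z : G m × G m) : ℂ :=
  ((A (-α) n₁ * A (-β) n₂ : ℝ) : ℂ)⁻¹ *
    ∑ i ∈ Finset.range (n₁ + 1), ∑ j ∈ Finset.range (n₂ + 1),
      ((A (-α) (n₁ - i) * A (-β) (n₂ - j) : ℝ) : ℂ) * fhat2 m μ f i j * psi m i z.1 * psi m j z.2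

/-- One-dimensional modulus of continuity in `L^p`. -/
def omegaOne (m : ℕ → ℕ) (μ : Measure (G m)) (p : ℝ≥0∞) (f : G m → ℂ) (n : ℕ) : ℝ≥0∞ :=
  ⨆ u ∈ I m n, eLpNorm (fun x => f (x - u) - f x) p μ

/-- First partial modulus of continuity in `L^p`. -/
def omega1 (m : ℕ → ℕ) (μ : Measure (G m)) (p : ℝ≥0∞) (f : G m × G m → ℂ) (n : ℕ) : ℝ≥0∞ :=
  ⨆ u ∈ I m n, eLpNorm (fun z => f (z.1 - u, z.2) - f z) p (μ.prod μ)

/-- Second partial modulus of continuity in `L^p`. -/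
def omega2 (m : ℕ → ℕ) (μ : Measure (G m)) (p : ℝ≥0∞) (f : G m × G m → ℂ) (n : ℕ) : ℝ≥0∞ :=
  ⨆ v ∈ I m n, eLpNorm (fun z => f (z.1, z.2 - v) - f z) p (μ.prod μ)

/-- Mixed modulus of continuity in `L^p`. -/
def omega12 (m : ℕ → ℕ) (μ : Measure (G m)) (p : ℝ≥0∞) (f : G m × G m → ℂ) (n l : ℕ) : ℝ≥0∞ :=
  ⨆ u ∈ I m n, ⨆ v ∈ I m l,
    eLpNorm (fun z => f (z.1 - u, z.2 - v) - f (z.1 - u, z.2) - f (z.1, z.2 - v) + f z) p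
      (μ.prod μ)

/-- Total modulus of continuity in `L^p`. -/
def omegaT (m : ℕ → ℕ) (μ : Measure (G m)) (p : ℝ≥0∞) (f : G m × G m → ℂ) (n : ℕ) : ℝ≥0∞ :=
  ⨆ u ∈ I m n, ⨆ v ∈ I m n, eLpNorm (fun z => f (z.1 - u, z.2 - v) - f z) p (μ.prod μ)

/-- Total modulus of continuity in the uniform norm. -/
def omegaC (m : ℕ → ℕ) (f : G m × G m → ℂ) (n : ℕ) : ℝ≥0∞ :=
  ⨆ u ∈ I m n, ⨆ v ∈ I m n, ⨆ z : G m × G m, (‖f (z.1 - u, z.2 - v) - f z‖₊ : ℝ≥0∞)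

/-!
The extremal function is `f₀ = ∑ⱼ M_j^{-(α+β)} r_j ⊗ r_j`. Since `r_j` is invariant under
translation by `I_n` for `j < n`, a shift in `I_n × I_n` only moves the tail `j ≥ n`, a geometric
series of size `O(M_n^{-(α+β)})`.

On the other side, the Vilenkin system is orthonormal: `ψ_i ψ̄_j` is a product of characters of the
first coordinates, which the hypothesis on `μ` makes uniformly distributed. Hence the
`(M_n, M_n)`-th Fourier coefficient of `σ_{M_n,M_n}^{-α,-β} f₀ - f₀` equals
`(A_{M_n}^{-α} A_{M_n}^{-β})⁻¹ M_n^{-(α+β)} - M_n^{-(α+β)}`. As `A_N^{-α} ≤ (N+1)^{-α}`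
(from `1 - x ≤ e^{-x}` and `log (N+1) ≤ H_N`), the first term is at least `1`, so this
coefficient, and with it the `L¹` norm, is at least `1 - 2^{-(α+β)}` for every `n ≥ 1`.
-/

variable {m : ℕ → ℕ}

lemma M_succ (k : ℕ) : M m (k + 1) = m k * M m k := rfl

lemma M_eq_prod (K : ℕ) : M m K = ∏ k ∈ range K, m k := by
  induction K with
  | zero => rfl
  | succ K ih => rw [M_succ, prod_range_succ, ih, mul_comm]

lemma M_dvd_M {k K : ℕ} (h : k ≤ K) : M m k ∣ M m K := by
  rw [M_eq_prod, M_eq_prod]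
  exact prod_dvd_prod_of_subset _ _ _ (range_subset_range.2 h)

lemma mod_M_succ (n k : ℕ) : n % M m (k + 1) = n % M m k + M m k * digit m n k := by
  rw [M_succ, mul_comm, Nat.mod_mul, digit]

lemma mod_M_eq_of_digit_eq {i j K : ℕ} (h : ∀ k < K, digit m i k = digit m j k) :
    i % M m K = j % M m K := by
  induction K with
  | zero => simp [M, Nat.mod_one]
  | succ K ih =>
    rw [mod_M_succ, mod_M_succ, ih fun k hk => h k (by omega), h K K.lt_succ_self]

lemma eq_of_digit_eq {i j K : ℕ} (hi : i < M m K) (hj : j < M m K)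
    (h : ∀ k < K, digit m i k = digit m j k) : i = j := by
  simpa [Nat.mod_eq_of_lt hi, Nat.mod_eq_of_lt hj] using mod_M_eq_of_digit_eq h

lemma digit_of_lt {n k : ℕ} (h : n < M m k) : digit m n k = 0 := by
  rw [digit, Nat.div_eq_of_lt h, Nat.zero_mod]

section Growth

variable (hm2 : ∀ k, 2 ≤ m k)
include hm2

lemma two_pow_mul_M_le (n i : ℕ) : 2 ^ i * M m n ≤ M m (n + i) := by
  induction i with
  | zero => simp
  | succ i ih =>
    calc 2 ^ (i + 1) * M m n = 2 * (2 ^ i * M m n) := by ring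
      _ ≤ m (n + i) * M m (n + i) := Nat.mul_le_mul (hm2 _) ih

lemma two_pow_le_M (n : ℕ) : 2 ^ n ≤ M m n := by
  simpa [M] using two_pow_mul_M_le hm2 0 n

lemma lt_M_self (n : ℕ) : n < M m n := n.lt_two_pow_self.trans_le (two_pow_le_M hm2 n)

lemma M_strictMono : StrictMono (M m) :=
  strictMono_nat_of_lt_succ fun n => by
    have := two_pow_mul_M_le hm2 n 1
    have := lt_M_self hm2 n
    omega

lemma digit_M (j k : ℕ) : digit m (M m j) k = if k = j then 1 else 0 := by
  rcases lt_trichotomy k j with hkj | rfl | hjk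
  · rw [if_neg hkj.ne, digit, ← Nat.mod_mul_right_div_self, mul_comm, ← M_succ,
      Nat.mod_eq_zero_of_dvd (M_dvd_M hkj), Nat.zero_div]
  · rw [if_pos rfl, digit, Nat.div_self ((Nat.zero_le k).trans_lt (lt_M_self hm2 k)),
      Nat.mod_eq_of_lt (hm2 k)]
  · rw [if_neg hjk.ne', digit_of_lt (M_strictMono hm2 hjk)]

end Growth

lemma continuous_rad (k : ℕ) : Continuous (rad m k) :=
  (continuous_of_discreteTopology (f := fun t : ZMod (m k) =>
    Complex.exp (2 * Real.pi * Complex.I * (t.val : ℂ) / (m k : ℂ)))).comp (continuous_apply k)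

lemma continuous_psi (n : ℕ) : Continuous (psi m n) :=
  continuous_finsetProd _ fun k _ => (continuous_rad k).pow _

lemma psi_M (hm2 : ∀ k, 2 ≤ m k) (j : ℕ) (x : G m) : psi m (M m j) x = rad m j x := by
  rw [psi, prod_eq_single_of_mem j (mem_range.2 (Nat.lt_succ_of_lt (lt_M_self hm2 j)))
    fun k _ hk => by rw [digit_M hm2, if_neg hk, pow_zero], digit_M hm2, if_pos rfl, pow_one]

section Characters

variable [∀ k, NeZero (m k)]

lemma M_pos (n : ℕ) : 0 < M m n := by
  rw [M_eq_prod]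
  exact prod_pos fun k _ => NeZero.pos _

lemma digit_lt (n k : ℕ) : digit m n k < m k := Nat.mod_lt _ (NeZero.pos _)

lemma rad_eq_stdAddChar (k : ℕ) (x : G m) : rad m k x = ZMod.stdAddChar (x k) := by
  rw [rad, ZMod.stdAddChar_apply, ZMod.toCircle_apply]

lemma norm_rad (k : ℕ) (x : G m) : ‖rad m k x‖ = 1 := by
  rw [rad_eq_stdAddChar, AddChar.norm_apply]

lemma norm_psi (n : ℕ) (x : G m) : ‖psi m n x‖ = 1 := by
  simp [psi, norm_rad]

variable (hm2 : ∀ k, 2 ≤ m k)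
include hm2

lemma psi_eq_prod {n K : ℕ} (h : n < K) (x : G m) :
    psi m n x = ∏ k : Fin K, ZMod.stdAddChar (x k * (digit m n k : ZMod (m k))) := by
  rw [Fin.prod_univ_eq_prod_range (fun k => ZMod.stdAddChar (x k * (digit m n k : ZMod (m k)))),
    psi]
  refine (prod_subset (range_subset_range.2 h) fun k _ hk => ?_).trans
    (prod_congr rfl fun k _ => ?_)
  · rw [digit_of_lt ((lt_M_self hm2 n).trans (M_strictMono hm2 (by simpa using hk))), pow_zero]
  · rw [rad_eq_stdAddChar, ← AddChar.map_nsmul_eq_pow, nsmul_eq_mul, mul_comm]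

lemma psi_mul_conj_psi {i j K : ℕ} (hi : i < K) (hj : j < K) (x : G m) :
    psi m i x * (starRingEnd ℂ) (psi m j x) =
      ∏ k : Fin K,
        ZMod.stdAddChar (x k * ((digit m i k : ZMod (m k)) - (digit m j k : ZMod (m k)))) := by
  rw [psi_eq_prod hm2 hi, psi_eq_prod hm2 hj, map_prod, ← prod_mul_distrib]
  refine prod_congr rfl fun k _ => ?_
  rw [← AddChar.map_neg_eq_conj, ← AddChar.map_add_eq_mul, mul_sub, sub_eq_add_neg]

end Characters

section Cylinder

variable [∀ k, NeZero (m k)] {μ : Measure (G m)} [IsFiniteMeasure μ]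
  (hμ : ∀ (n : ℕ) (x : G m), μ {y : G m | ∀ j < n, y j = x j} = (M m n : ℝ≥0∞)⁻¹)
include hμ

lemma integral_comp_fin_proj (K : ℕ) (g : (∀ k : Fin K, ZMod (m k)) → ℂ) :
    ∫ x, g (fun k => x k) ∂μ = (M m K : ℂ)⁻¹ * ∑ w, g w := by
  have hπ : Measurable fun (x : G m) (k : Fin K) => x k :=
    measurable_pi_lambda _ fun k => measurable_pi_apply _
  have hfiber (w : ∀ k : Fin K, ZMod (m k)) :
      (μ.map fun (x : G m) (k : Fin K) => x k).real {w} = (M m K : ℝ)⁻¹ := by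
    let x₀ : G m := fun j => if h : j < K then w ⟨j, h⟩ else 0
    have hset : (fun (x : G m) (k : Fin K) => x k) ⁻¹' {w} = {y | ∀ j < K, y j = x₀ j} := by
      ext y
      simp only [Set.mem_preimage, Set.mem_singleton_iff, funext_iff, Fin.forall_iff]
      exact forall₂_congr fun j hj => by simp [x₀, hj]
    rw [measureReal_def, Measure.map_apply hπ (measurableSet_singleton w), hset, hμ,
      ENNReal.toReal_inv, ENNReal.toReal_natCast]
  rw [← integral_map hπ.aemeasurable (measurable_of_countable g).aestronglyMeasurable,
    integral_fintype .of_finite]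
  simp_rw [hfiber, ← smul_sum, Complex.real_smul]
  push_cast
  rfl

lemma integral_prod_stdAddChar (K : ℕ) (c : ∀ k : Fin K, ZMod (m k)) :
    ∫ x, ∏ k : Fin K, ZMod.stdAddChar (x k * c k) ∂μ = if c = 0 then 1 else 0 := by
  rw [integral_comp_fin_proj hμ K fun w => ∏ k, ZMod.stdAddChar (w k * c k),
    ← Fintype.prod_sum fun k t => ZMod.stdAddChar (t * c k)]
  simp_rw [AddChar.sum_mulShift _ (ZMod.isPrimitive_stdAddChar _), ZMod.card]
  split_ifs with hc
  · have hM : (M m K : ℂ) ≠ 0 := Nat.cast_ne_zero.2 (M_pos K).ne'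
    simp [hc, M_eq_prod, ← Fin.prod_univ_eq_prod_range] at hM ⊢
    exact inv_mul_cancel₀ hM
  · obtain ⟨k, hk : c k ≠ 0⟩ := Function.ne_iff.1 hc
    rw [prod_eq_zero (mem_univ k) (by rw [if_neg hk, Nat.cast_zero]), mul_zero]

lemma fhat1_psi (hm2 : ∀ k, 2 ≤ m k) (i j : ℕ) :
    fhat1 m μ (psi m i) j = if i = j then 1 else 0 := by
  have hi : i < max i j + 1 := by omega
  have hj : j < max i j + 1 := by omega
  simp_rw [fhat1, psi_mul_conj_psi hm2 hi hj]
  rw [integral_prod_stdAddChar hμ]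
  refine if_congr ⟨fun hc => ?_, fun hij => ?_⟩ rfl rfl
  · have hM := lt_M_self hm2 (max i j + 1)
    refine eq_of_digit_eq (hi.trans hM) (hj.trans hM) fun k hk => ?_
    have := congr_fun hc ⟨k, hk⟩
    rwa [Pi.zero_apply, sub_eq_zero, ZMod.natCast_eq_natCast_iff', Nat.mod_eq_of_lt (digit_lt _ _),
      Nat.mod_eq_of_lt (digit_lt _ _)] at this
  · funext k
    simp [hij]

end Cylinder

section Fourier

variable {μ : Measure (G m)}

lemma fhat2_const_mul (c : ℂ) (F : G m × G m → ℂ) (i j : ℕ) :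
    fhat2 m μ (fun z => c * F z) i j = c * fhat2 m μ F i j := by
  rw [fhat2, fhat2, ← integral_const_mul]
  simp_rw [mul_assoc]

lemma continuous_cesaro2 (α β : ℝ) (f : G m × G m → ℂ) (n₁ n₂ : ℕ) :
    Continuous (cesaro2 m μ α β f n₁ n₂) :=
  continuous_const.mul <| continuous_finsetSum _ fun i _ => continuous_finsetSum _ fun j _ =>
    (continuous_const.mul ((continuous_psi i).comp continuous_fst)).mul
      ((continuous_psi j).comp continuous_snd)

variable [∀ k, NeZero (m k)]

lemma integrable_mul_conj_psi {F : G m × G m → ℂ} (hF : Integrable F (μ.prod μ)) (i j : ℕ) :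
    Integrable (fun z => F z * (starRingEnd ℂ) (psi m i z.1) * (starRingEnd ℂ) (psi m j z.2))
      (μ.prod μ) := by
  have hconj (n : ℕ) : Continuous fun x : G m => (starRingEnd ℂ) (psi m n x) :=
    Complex.continuous_conj.comp (continuous_psi n)
  refine (hF.mul_bdd ((hconj i).comp continuous_fst).aestronglyMeasurable
      (c := 1) (.of_forall fun z => ?_)).mul_bdd
    ((hconj j).comp continuous_snd).aestronglyMeasurable (c := 1) (.of_forall fun z => ?_) <;>
  simp [norm_psi]

lemma fhat2_sub {f g : G m × G m → ℂ} (hf : Integrable f (μ.prod μ))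
    (hg : Integrable g (μ.prod μ)) (i j : ℕ) :
    fhat2 m μ (fun z => f z - g z) i j = fhat2 m μ f i j - fhat2 m μ g i j := by
  rw [fhat2, fhat2, fhat2, ← integral_sub (integrable_mul_conj_psi hf i j)
    (integrable_mul_conj_psi hg i j)]
  congr 1
  funext z
  ring

lemma fhat2_finset_sum {ι : Type*} (s : Finset ι) {F : ι → G m × G m → ℂ}
    (hF : ∀ t ∈ s, Integrable (F t) (μ.prod μ)) (i j : ℕ) :
    fhat2 m μ (fun z => ∑ t ∈ s, F t z) i j = ∑ t ∈ s, fhat2 m μ (F t) i j := by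
  simp_rw [fhat2, sum_mul]
  exact integral_finsetSum s fun t ht => integrable_mul_conj_psi (hF t ht) i j

lemma enorm_fhat2_le_eLpNorm_one (f : G m × G m → ℂ) (i j : ℕ) :
    ‖fhat2 m μ f i j‖ₑ ≤ eLpNorm f 1 (μ.prod μ) := by
  have hconj (n : ℕ) (x : G m) : ‖(starRingEnd ℂ) (psi m n x)‖ₑ = 1 := by
    rw [← ofReal_norm, RCLike.norm_conj, norm_psi, ENNReal.ofReal_one]
  rw [eLpNorm_one_eq_lintegral_enorm]
  refine (enorm_integral_le_lintegral_enorm _).trans (le_of_eq (lintegral_congr fun z => ?_))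
  rw [enorm_mul, enorm_mul, hconj, hconj, mul_one, mul_one]

variable [IsFiniteMeasure μ]

lemma fhat2_mul (g h : G m → ℂ) (i j : ℕ) :
    fhat2 m μ (fun z => g z.1 * h z.2) i j = fhat1 m μ g i * fhat1 m μ h j := by
  rw [fhat2, fhat1, fhat1, ← integral_prod_mul]
  congr 1
  funext z
  ring

variable (hμ : ∀ (n : ℕ) (x : G m), μ {y : G m | ∀ j < n, y j = x j} = (M m n : ℝ≥0∞)⁻¹)
  (hm2 : ∀ k, 2 ≤ m k)
include hμ hm2

lemma fhat2_sum_psi (c : ℕ → ℕ → ℂ) {a b i j : ℕ} (hi : i < a) (hj : j < b) :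
    fhat2 m μ (fun z => ∑ k ∈ range a, ∑ l ∈ range b, c k l * psi m k z.1 * psi m l z.2) i j =
      c i j := by
  have hcont (k l : ℕ) : Continuous fun z : G m × G m => c k l * (psi m k z.1 * psi m l z.2) :=
    continuous_const.mul
      (((continuous_psi k).comp continuous_fst).mul ((continuous_psi l).comp continuous_snd))
  simp_rw [mul_assoc, ← sum_product']
  rw [fhat2_finset_sum _ fun t _ =>
    (hcont t.1 t.2).integrable_of_hasCompactSupport (.of_compactSpace _)]
  simp_rw [fhat2_const_mul, fhat2_mul, fhat1_psi hμ hm2]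
  rw [sum_eq_single_of_mem (i, j) (by simp [hi, hj]) fun t _ ht => ?_]
  · simp
  · rcases t with ⟨k, l⟩
    rcases not_and_or.1 (mt Prod.ext_iff.2 ht) with h | h <;> simp [h]

lemma fhat2_cesaro2 (α β : ℝ) (f : G m × G m → ℂ) {n₁ n₂ i j : ℕ} (hi : i ≤ n₁) (hj : j ≤ n₂) :
    fhat2 m μ (cesaro2 m μ α β f n₁ n₂) i j =
      ((A (-α) n₁ * A (-β) n₂ : ℝ) : ℂ)⁻¹ * ((A (-α) (n₁ - i) * A (-β) (n₂ - j) : ℝ) : ℂ) *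
        fhat2 m μ f i j := by
  have hpoly : cesaro2 m μ α β f n₁ n₂ = fun z =>
      ∑ k ∈ range (n₁ + 1), ∑ l ∈ range (n₂ + 1),
        ((A (-α) n₁ * A (-β) n₂ : ℝ) : ℂ)⁻¹ * ((A (-α) (n₁ - k) * A (-β) (n₂ - l) : ℝ) : ℂ) *
          fhat2 m μ f k l * psi m k z.1 * psi m l z.2 := by
    funext z
    simp only [cesaro2, mul_sum, mul_assoc]
  rw [hpoly, fhat2_sum_psi hμ hm2 _ (Nat.lt_succ_of_le hi) (Nat.lt_succ_of_le hj)]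

end Fourier

lemma A_zero (γ : ℝ) : A γ 0 = 1 := by simp [A]

lemma A_neg_eq_prod (α : ℝ) (n : ℕ) : A (-α) n = ∏ i ∈ range n, (1 - α / (i + 1)) := by
  rw [A, ← prod_range_add_one_eq_factorial, Nat.cast_prod, ← prod_div_distrib]
  refine prod_congr rfl fun i _ => ?_
  push_cast
  field_simp
  ring

lemma A_neg_pos {α : ℝ} (hα : α < 1) (n : ℕ) : 0 < A (-α) n := by
  rw [A_neg_eq_prod]
  refine prod_pos fun i _ => sub_pos.2 ((div_lt_one (by positivity)).2 ?_)
  linarith [(i.cast_nonneg : (0 : ℝ) ≤ i)]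

lemma A_neg_nonneg {α : ℝ} (hα : α ≤ 1) (n : ℕ) : 0 ≤ A (-α) n := by
  rw [A_neg_eq_prod]
  refine prod_nonneg fun i _ => sub_nonneg.2 (div_le_one_of_le₀ ?_ (by positivity))
  linarith [(i.cast_nonneg : (0 : ℝ) ≤ i)]

lemma A_neg_le_rpow {α : ℝ} (h0 : 0 ≤ α) (h1 : α ≤ 1) (n : ℕ) :
    A (-α) n ≤ ((n : ℝ) + 1) ^ (-α) := by
  have hH : Real.log (n + 1) ≤ harmonic n := by exact_mod_cast log_add_one_le_harmonic n
  rw [A_neg_eq_prod]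
  calc ∏ i ∈ range n, (1 - α / (i + 1))
      ≤ ∏ i ∈ range n, Real.exp (-(α / (i + 1))) :=
        prod_le_prod (fun i _ => sub_nonneg.2 (div_le_one_of_le₀ (by linarith) (by positivity)))
          fun i _ => Real.one_sub_le_exp_neg _
    _ = Real.exp (-α * harmonic n) := by
        rw [← Real.exp_sum, harmonic]
        push_cast
        rw [mul_sum]
        exact congrArg _ (sum_congr rfl fun i _ => by ring)
    _ ≤ Real.exp (-α * Real.log (n + 1)) :=
        Real.exp_le_exp.2 (mul_le_mul_of_nonpos_left hH (by linarith))
    _ = ((n : ℝ) + 1) ^ (-α) := by rw [Real.rpow_def_of_pos (by positivity), mul_comm]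

lemma A_neg_mul_A_neg_le {α β : ℝ} (hα : α ∈ Set.Icc (0 : ℝ) 1) (hβ : β ∈ Set.Icc (0 : ℝ) 1)
    {n : ℕ} (hn : 0 < n) : A (-α) n * A (-β) n ≤ ((n : ℝ)⁻¹) ^ (α + β) := by
  have hn' : (0 : ℝ) < n := by exact_mod_cast hn
  calc A (-α) n * A (-β) n ≤ ((n : ℝ) + 1) ^ (-α) * ((n : ℝ) + 1) ^ (-β) :=
        mul_le_mul (A_neg_le_rpow hα.1 hα.2 n) (A_neg_le_rpow hβ.1 hβ.2 n)
          (A_neg_nonneg hβ.2 n) (by positivity)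
    _ = (((n : ℝ) + 1)⁻¹) ^ (α + β) := by
        rw [← Real.rpow_add (by positivity), Real.inv_rpow (by positivity), ← Real.rpow_neg
          (by positivity), neg_add]
    _ ≤ ((n : ℝ)⁻¹) ^ (α + β) :=
        Real.rpow_le_rpow (by positivity) (inv_anti₀ hn' (by linarith))
          (add_nonneg hα.1 hβ.1)

def lacunaryTerm (m : ℕ → ℕ) (p : ℝ) (j : ℕ) (z : G m × G m) : ℂ :=
  ((((M m j : ℝ)⁻¹) ^ p : ℝ) : ℂ) * (rad m j z.1 * rad m j z.2)

/-- The paper's `f₀` is `lacunarySeries m (α + β)`. -/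
def lacunarySeries (m : ℕ → ℕ) (p : ℝ) (z : G m × G m) : ℂ := ∑' j, lacunaryTerm m p j z

section Lacunary

variable [∀ k, NeZero (m k)] {p : ℝ}

lemma M_inv_rpow_pos (p : ℝ) (j : ℕ) : 0 < ((M m j : ℝ)⁻¹) ^ p :=
  Real.rpow_pos_of_pos (inv_pos.2 (Nat.cast_pos.2 (M_pos j))) p

lemma norm_lacunaryTerm (j : ℕ) (z : G m × G m) :
    ‖lacunaryTerm m p j z‖ = ((M m j : ℝ)⁻¹) ^ p := by
  rw [lacunaryTerm, norm_mul, norm_mul, norm_rad, norm_rad, Complex.norm_real,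
    Real.norm_of_nonneg (M_inv_rpow_pos p j).le, mul_one, mul_one]

variable (hm2 : ∀ k, 2 ≤ m k) (hp : 0 < p)
include hm2 hp

lemma M_inv_rpow_add_le (n i : ℕ) :
    ((M m (n + i) : ℝ)⁻¹) ^ p ≤ ((2 : ℝ)⁻¹ ^ p) ^ i * ((M m n : ℝ)⁻¹) ^ p := by
  have hM : (2 : ℝ) ^ i * M m n ≤ M m (n + i) := by exact_mod_cast two_pow_mul_M_le hm2 n i
  have hMn : (0 : ℝ) < M m n := Nat.cast_pos.2 (M_pos n)
  calc ((M m (n + i) : ℝ)⁻¹) ^ p ≤ (((2 : ℝ) ^ i * M m n)⁻¹) ^ p :=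
        Real.rpow_le_rpow (by positivity) (inv_anti₀ (by positivity) hM) hp.le
    _ = ((2 : ℝ)⁻¹ ^ p) ^ i * ((M m n : ℝ)⁻¹) ^ p := by
        rw [mul_inv, Real.mul_rpow (by positivity) (by positivity), ← inv_pow,
          Real.rpow_pow_comm (by norm_num)]

lemma M_inv_rpow_le (i : ℕ) : ((M m i : ℝ)⁻¹) ^ p ≤ ((2 : ℝ)⁻¹ ^ p) ^ i := by
  simpa [M] using M_inv_rpow_add_le hm2 hp 0 i

lemma summable_M_inv_rpow : Summable fun j => ((M m j : ℝ)⁻¹) ^ p :=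
  .of_nonneg_of_le (fun j => (M_inv_rpow_pos p j).le) (M_inv_rpow_le hm2 hp)
    (summable_geometric_of_lt_one (by positivity) (Real.rpow_lt_one (by norm_num) (by norm_num) hp))

lemma tsum_M_inv_rpow_tail_le (n : ℕ) :
    ∑' i, ((M m (i + n) : ℝ)⁻¹) ^ p ≤ (1 - (2 : ℝ)⁻¹ ^ p)⁻¹ * ((M m n : ℝ)⁻¹) ^ p := by
  have hr : (2 : ℝ)⁻¹ ^ p < 1 := Real.rpow_lt_one (by norm_num) (by norm_num) hp
  have hgeom := summable_geometric_of_lt_one (by positivity) hr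
  rw [← tsum_geometric_of_lt_one (by positivity) hr, ← tsum_mul_right]
  refine Summable.tsum_le_tsum (fun i => ?_)
    ((summable_nat_add_iff n).2 (summable_M_inv_rpow hm2 hp)) (hgeom.mul_right _)
  rw [add_comm]
  exact M_inv_rpow_add_le hm2 hp n i

lemma summable_lacunaryTerm (z : G m × G m) : Summable fun j => lacunaryTerm m p j z :=
  .of_norm (by simpa only [norm_lacunaryTerm] using summable_M_inv_rpow hm2 hp)

lemma continuous_lacunarySeries : Continuous (lacunarySeries m p) :=
  continuous_tsum (fun j => continuous_const.mul (((continuous_rad j).comp continuous_fst).mul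
      ((continuous_rad j).comp continuous_snd)))
    (summable_M_inv_rpow hm2 hp) fun j z => (norm_lacunaryTerm j z).le

lemma norm_lacunarySeries_sub_le (n : ℕ) {u v : G m} (hu : u ∈ I m n) (hv : v ∈ I m n)
    (z : G m × G m) :
    ‖lacunarySeries m p (z.1 - u, z.2 - v) - lacunarySeries m p z‖ ≤
      2 * (1 - (2 : ℝ)⁻¹ ^ p)⁻¹ * ((M m n : ℝ)⁻¹) ^ p := by
  have hhead : ∀ j < n, lacunaryTerm m p j (z.1 - u, z.2 - v) = lacunaryTerm m p j z := by
    intro j hj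
    simp only [lacunaryTerm, rad, Pi.sub_apply, hu j hj, hv j hj, sub_zero]
  have htail (w : G m × G m) :
      ‖∑' i, lacunaryTerm m p (i + n) w‖ ≤ (1 - (2 : ℝ)⁻¹ ^ p)⁻¹ * ((M m n : ℝ)⁻¹) ^ p := by
    have hnorm : (fun i => ‖lacunaryTerm m p (i + n) w‖) = fun i => ((M m (i + n) : ℝ)⁻¹) ^ p :=
      funext fun i => norm_lacunaryTerm _ w
    refine (norm_tsum_le_tsum_norm ?_).trans ?_ <;> rw [hnorm]
    · exact (summable_nat_add_iff n).2 (summable_M_inv_rpow hm2 hp)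
    · exact tsum_M_inv_rpow_tail_le hm2 hp n
  rw [lacunarySeries, lacunarySeries, ← (summable_lacunaryTerm hm2 hp _).sum_add_tsum_nat_add n,
    ← (summable_lacunaryTerm hm2 hp z).sum_add_tsum_nat_add n,
    sum_congr rfl fun j hj => hhead j (mem_range.1 hj), add_sub_add_left_eq_sub]
  refine (norm_sub_le _ _).trans ?_
  linarith [htail (z.1 - u, z.2 - v), htail z]

lemma omegaC_lacunarySeries_le (n : ℕ) :
    omegaC m (lacunarySeries m p) n ≤
      ENNReal.ofReal (2 * (1 - (2 : ℝ)⁻¹ ^ p)⁻¹) * ((M m n : ℝ≥0∞)⁻¹) ^ p := by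
  have hM : (0 : ℝ) < M m n := Nat.cast_pos.2 (M_pos n)
  have hr : (2 : ℝ)⁻¹ ^ p < 1 := Real.rpow_lt_one (by norm_num) (by norm_num) hp
  have hrpow : ((M m n : ℝ≥0∞)⁻¹) ^ p = ENNReal.ofReal (((M m n : ℝ)⁻¹) ^ p) := by
    rw [← ENNReal.ofReal_rpow_of_pos (by positivity), ENNReal.ofReal_inv_of_pos hM,
      ENNReal.ofReal_natCast]
  rw [hrpow, ← ENNReal.ofReal_mul (by linarith [inv_pos.2 (sub_pos.2 hr)])]
  refine iSup₂_le fun u hu => iSup₂_le fun v hv => iSup_le fun z => ?_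
  rw [← enorm_eq_nnnorm, ← ofReal_norm]
  exact ENNReal.ofReal_le_ofReal (norm_lacunarySeries_sub_le hm2 hp n hu hv z)

end Lacunary

section Extremal

variable [∀ k, NeZero (m k)] {μ : Measure (G m)} [IsFiniteMeasure μ]
  (hμ : ∀ (n : ℕ) (x : G m), μ {y : G m | ∀ j < n, y j = x j} = (M m n : ℝ≥0∞)⁻¹)
  (hm2 : ∀ k, 2 ≤ m k) {p : ℝ} (hp : 0 < p)
include hμ hm2 hp

lemma fhat2_lacunarySeries (n : ℕ) :
    fhat2 m μ (lacunarySeries m p) (M m n) (M m n) = ((((M m n : ℝ)⁻¹) ^ p : ℝ) : ℂ) := by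
  have hcont (j : ℕ) : Continuous (lacunaryTerm m p j) :=
    continuous_const.mul (((continuous_rad j).comp continuous_fst).mul
      ((continuous_rad j).comp continuous_snd))
  have hterm (j : ℕ) : fhat2 m μ (lacunaryTerm m p j) (M m n) (M m n) =
      if j = n then ((((M m n : ℝ)⁻¹) ^ p : ℝ) : ℂ) else 0 := by
    have hpsi : lacunaryTerm m p j = fun z =>
        ((((M m j : ℝ)⁻¹) ^ p : ℝ) : ℂ) * (psi m (M m j) z.1 * psi m (M m j) z.2) := by
      funext z
      rw [lacunaryTerm, psi_M hm2, psi_M hm2]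
    rw [hpsi, fhat2_const_mul, fhat2_mul, fhat1_psi hμ hm2]
    rcases eq_or_ne j n with rfl | h
    · simp
    · simp [h, (M_strictMono hm2).injective.ne h]
  have hnorm (j : ℕ) : ∫ z, ‖lacunaryTerm m p j z * (starRingEnd ℂ) (psi m (M m n) z.1) *
      (starRingEnd ℂ) (psi m (M m n) z.2)‖ ∂(μ.prod μ) =
        (μ.prod μ).real Set.univ * ((M m j : ℝ)⁻¹) ^ p := by
    simp only [norm_mul, RCLike.norm_conj, norm_psi, mul_one, norm_lacunaryTerm, integral_const,
      smul_eq_mul]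
  rw [fhat2]
  simp_rw [lacunarySeries, ← tsum_mul_right]
  rw [← integral_tsum_of_summable_integral_norm
    (fun j => integrable_mul_conj_psi ((hcont j).integrable_of_hasCompactSupport
      (.of_compactSpace _)) _ _)
    (by simpa only [hnorm] using (summable_M_inv_rpow hm2 hp).mul_left _)]
  exact (tsum_congr hterm).trans (tsum_ite_eq n _)

lemma fhat2_cesaro2_sub_lacunarySeries (α β : ℝ) (n : ℕ) :
    fhat2 m μ (fun z => cesaro2 m μ α β (lacunarySeries m p) (M m n) (M m n) z -
      lacunarySeries m p z) (M m n) (M m n) =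
      (((A (-α) (M m n) * A (-β) (M m n))⁻¹ * ((M m n : ℝ)⁻¹) ^ p -
        ((M m n : ℝ)⁻¹) ^ p : ℝ) : ℂ) := by
  rw [fhat2_sub
      ((continuous_cesaro2 _ _ _ _ _).integrable_of_hasCompactSupport (.of_compactSpace _))
      ((continuous_lacunarySeries hm2 hp).integrable_of_hasCompactSupport (.of_compactSpace _)),
    fhat2_cesaro2 hμ hm2 α β _ le_rfl le_rfl, Nat.sub_self, A_zero, A_zero,
    fhat2_lacunarySeries hμ hm2 hp]
  push_cast
  ring

end Extremal

lemma one_sub_le_eLpNorm_cesaro2_sub_lacunarySeries [∀ k, NeZero (m k)] {μ : Measure (G m)}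
    [IsFiniteMeasure μ]
    (hμ : ∀ (n : ℕ) (x : G m), μ {y : G m | ∀ j < n, y j = x j} = (M m n : ℝ≥0∞)⁻¹)
    (hm2 : ∀ k, 2 ≤ m k) {α β : ℝ} (hα : α ∈ Set.Ioo (0 : ℝ) 1) (hβ : β ∈ Set.Ioo (0 : ℝ) 1)
    {n : ℕ} (hn : 0 < n) :
    ENNReal.ofReal (1 - (2 : ℝ)⁻¹ ^ (α + β)) ≤
      eLpNorm (fun z => cesaro2 m μ α β (lacunarySeries m (α + β)) (M m n) (M m n) z -
        lacunarySeries m (α + β) z) 1 (μ.prod μ) := by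
  have hp : 0 < α + β := add_pos hα.1 hβ.1
  set a := ((M m n : ℝ)⁻¹) ^ (α + β)
  have hAA_pos : 0 < A (-α) (M m n) * A (-β) (M m n) :=
    mul_pos (A_neg_pos hα.2 _) (A_neg_pos hβ.2 _)
  have hAA_le : A (-α) (M m n) * A (-β) (M m n) ≤ a :=
    A_neg_mul_A_neg_le (Set.Ioo_subset_Icc_self hα) (Set.Ioo_subset_Icc_self hβ) (M_pos n)
  have ha_le : a ≤ (2 : ℝ)⁻¹ ^ (α + β) :=
    (M_inv_rpow_le hm2 hp n).trans (pow_le_of_le_one (by positivity)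
      (Real.rpow_le_one (by norm_num) (by norm_num) hp.le) hn.ne')
  have hone : 1 ≤ (A (-α) (M m n) * A (-β) (M m n))⁻¹ * a := by
    rwa [le_inv_mul_iff₀ hAA_pos, mul_one]
  refine le_trans ?_ (enorm_fhat2_le_eLpNorm_one _ (M m n) (M m n))
  rw [fhat2_cesaro2_sub_lacunarySeries hμ hm2 hp, ← ofReal_norm, Complex.norm_real,
    Real.norm_eq_abs]
  have habs := le_abs_self ((A (-α) (M m n) * A (-β) (M m n))⁻¹ * a - a)
  exact ENNReal.ofReal_le_ofReal (by linarith)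

theorem statement_3_general (m : ℕ → ℕ) (hm2 : ∀ k, 2 ≤ m k)
    (μ : Measure (G m)) [IsProbabilityMeasure μ]
    (hμ : ∀ (n : ℕ) (x : G m), μ {y : G m | ∀ j < n, y j = x j} = (M m n : ℝ≥0∞)⁻¹)
    (α β : ℝ) (hα : α ∈ Set.Ioo (0 : ℝ) 1) (hβ : β ∈ Set.Ioo (0 : ℝ) 1) :
    ∃ f₀ : G m × G m → ℂ, Continuous f₀ ∧
      (∃ C : ℝ≥0, 0 < C ∧ ∀ n : ℕ, omegaC m f₀ n ≤ C * ((M m n : ℝ≥0∞)⁻¹) ^ (α + β)) ∧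
      0 < Filter.limsup (fun n =>
        eLpNorm (fun z => cesaro2 m μ α β f₀ (M m n) (M m n) z - f₀ z) 1 (μ.prod μ)) atTop := by
  have (k : ℕ) : NeZero (m k) := ⟨by have := hm2 k; omega⟩
  have hp : 0 < α + β := add_pos hα.1 hβ.1
  have hr : 0 < 1 - (2 : ℝ)⁻¹ ^ (α + β) :=
    sub_pos.2 (Real.rpow_lt_one (by norm_num) (by norm_num) hp)
  refine ⟨lacunarySeries m (α + β), continuous_lacunarySeries hm2 hp,
    ⟨(2 * (1 - (2 : ℝ)⁻¹ ^ (α + β))⁻¹).toNNReal, Real.toNNReal_pos.2 (by positivity),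
      omegaC_lacunarySeries_le hm2 hp⟩, ?_⟩
  refine (ENNReal.ofReal_pos.2 hr).trans_le (le_limsup_of_frequently_le' ?_)
  exact ((eventually_gt_atTop 0).mono fun n hn =>
    one_sub_le_eLpNorm_cesaro2_sub_lacunarySeries hμ hm2 hα hβ hn).frequently

theorem statement_3 (m : ℕ → ℕ) (hm2 : ∀ k, 2 ≤ m k) (hmbd : ∃ B, ∀ k, m k ≤ B)
    (μ : Measure (G m)) [IsProbabilityMeasure μ]
    (hμ : ∀ (n : ℕ) (x : G m), μ {y : G m | ∀ j < n, y j = x j} = (M m n : ℝ≥0∞)⁻¹)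
    (α β : ℝ) (hα : α ∈ Set.Ioo (0 : ℝ) 1) (hβ : β ∈ Set.Ioo (0 : ℝ) 1) (hαβ : α + β < 1) :
    ∃ f₀ : G m × G m → ℂ, Continuous f₀ ∧
      (∃ C : ℝ≥0, 0 < C ∧ ∀ n : ℕ, omegaC m f₀ n ≤ C * ((M m n : ℝ≥0∞)⁻¹) ^ (α + β)) ∧
      0 < Filter.limsup (fun n =>
        eLpNorm (fun z => cesaro2 m μ α β f₀ (M m n) (M m n) z - f₀ z) 1 (μ.prod μ)) atTop :=
  statement_3_general m hm2 μ hμ α β hα hβ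

end Vilenkin
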